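/- arXiv:1605.06153 — 4 statements merged into one kernel-verified Lean document; each statement's English description precedes it below -/
import Mathlib

section
/- Let n ≥ 1 and let B be an n×n matrix over ℤ. Then for every group automorphism ψ of ker B = {x ∈ ℤⁿ : Bx = 0}, there exist U, V ∈ GL(n,ℤ) such that UBV = B, Ux + Bℤⁿ = x + Bℤⁿ for all x ∈ ℤⁿ (i.e. U induces the identity automorphism of cok B), and ψ(x) = V⁻¹x for all x ∈ ker B. -/
/-!
Over `ℤ` the image of `B` is a submodule of a free module, hence free, so the surjection
`ℤⁿ → B ℤⁿ` splits and `ker B` is a direct summand of `ℤⁿ`. Extending `ψ` by the identity on a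
complement gives an automorphism `W` of `ℤⁿ` with `B W = B` that restricts to `ψ` on `ker B`;
take `U = 1` and `V = W⁻¹`.
-/

open Matrix

open LinearMap in
theorem LinearMap.exists_isCompl_ker_of_projective_range {R M N : Type*} [Ring R]
    [AddCommGroup M] [Module R M] [AddCommGroup N] [Module R N]
    (f : M →ₗ[R] N) [Module.Projective R (range f)] :
    ∃ q : Submodule R M, IsCompl (ker f) q := by
  obtain ⟨s, hs⟩ := f.rangeRestrict.exists_rightInverse_of_surjective (range_rangeRestrict f)
  have hidem : IsIdempotentElem (s ∘ₗ f.rangeRestrict) := by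
    rw [IsIdempotentElem, Module.End.mul_eq_comp, comp_assoc, ← comp_assoc f.rangeRestrict,
      hs, id_comp]
  have hker : ker (s ∘ₗ f.rangeRestrict) = ker f := by
    rw [ker_comp_of_ker_eq_bot _ (ker_eq_bot_of_inverse hs), ker_rangeRestrict]
  exact ⟨_, hker ▸ hidem.isCompl.symm⟩

theorem Submodule.exists_linearEquiv_extend_of_isCompl {R M : Type*} [Ring R]
    [AddCommGroup M] [Module R M] {p q : Submodule R M} (h : IsCompl p q) (e : p ≃ₗ[R] p) :
    ∃ W : M ≃ₗ[R] M, (∀ x : p, W x = e x) ∧ ∀ x, W x - x ∈ p := by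
  let P := p.prodEquivOfIsCompl q h
  refine ⟨P.symm ≪≫ₗ e.prodCongr (LinearEquiv.refl R q) ≪≫ₗ P, fun x => ?_, fun x => ?_⟩
  · simp [P]
  · obtain ⟨⟨a, b⟩, rfl⟩ := P.surjective x
    rw [LinearEquiv.trans_apply, LinearEquiv.trans_apply, P.symm_apply_apply]
    simpa [P] using sub_mem (e a).2 a.2

theorem LinearMap.exists_linearEquiv_comp_eq_extend_ker {R M N : Type*} [Ring R]
    [AddCommGroup M] [Module R M] [AddCommGroup N] [Module R N]
    (f : M →ₗ[R] N) [Module.Projective R (range f)] (ψ : ker f ≃ₗ[R] ker f) :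
    ∃ W : M ≃ₗ[R] M, f ∘ₗ W = f ∧ ∀ x : ker f, W x = ψ x := by
  obtain ⟨q, hq⟩ := f.exists_isCompl_ker_of_projective_range
  obtain ⟨W, hWψ, hW⟩ := Submodule.exists_linearEquiv_extend_of_isCompl hq ψ
  refine ⟨W, LinearMap.ext fun x => ?_, hWψ⟩
  simpa [sub_eq_zero] using hW x

theorem Matrix.GeneralLinearGroup.exists_mulVec_eq_linearEquiv {ι R : Type*} [Fintype ι]
    [DecidableEq ι] [CommRing R] (W : (ι → R) ≃ₗ[R] (ι → R)) :
    ∃ V : GL ι R, ∀ x, (V : Matrix ι ι R) *ᵥ x = W x := by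
  refine ⟨toLin.symm (LinearMap.GeneralLinearGroup.ofLinearEquiv W), fun x => ?_⟩
  rw [← Matrix.mulVecLin_apply, ← coe_toLin, MulEquiv.apply_symm_apply]
  rfl

theorem lift_kernel_automorphism_general
    (n : ℕ) (B : Matrix (Fin n) (Fin n) ℤ)
    (ψ : AddAut (LinearMap.ker B.mulVecLin)) :
    ∃ U V : Matrix.GeneralLinearGroup (Fin n) ℤ,
      (U : Matrix (Fin n) (Fin n) ℤ) * B * (V : Matrix (Fin n) (Fin n) ℤ) = B ∧
      (∀ x : Fin n → ℤ,
        (QuotientAddGroup.mk ((U : Matrix (Fin n) (Fin n) ℤ).mulVec x) :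
            (Fin n → ℤ) ⧸ (LinearMap.range B.mulVecLin).toAddSubgroup)
          = QuotientAddGroup.mk x) ∧
      (∀ x : LinearMap.ker B.mulVecLin,
        (↑(ψ x) : Fin n → ℤ)
          = ((V⁻¹ : Matrix.GeneralLinearGroup (Fin n) ℤ) : Matrix (Fin n) (Fin n) ℤ).mulVec
              (x : Fin n → ℤ)) := by
  obtain ⟨W, hBW, hWψ⟩ :=
    B.mulVecLin.exists_linearEquiv_comp_eq_extend_ker (ψ : _ ≃+ _).toIntLinearEquiv
  obtain ⟨V, hV⟩ := GeneralLinearGroup.exists_mulVec_eq_linearEquiv W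
  have hBV : B * V = B := ext_iff_mulVec.2 fun x => by
    rw [← mulVec_mulVec, hV]
    exact LinearMap.congr_fun hBW x
  refine ⟨1, V⁻¹, ?_, fun x => by simp, fun x => ?_⟩
  · rw [GeneralLinearGroup.coe_one, one_mul]
    conv_lhs => rw [← hBV]
    rw [mul_assoc, ← GeneralLinearGroup.coe_mul,
      mul_inv_cancel, GeneralLinearGroup.coe_one, mul_one]
  · rw [inv_inv, hV, hWψ]
    rfl

/-- Every automorphism of `ker B` lifts to a `GL`-equivalence `(U, V) : B → B`
where `U` induces the identity on `cok B`. -/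
theorem lift_kernel_automorphism
    (n : ℕ) (hn : 1 ≤ n) (B : Matrix (Fin n) (Fin n) ℤ)
    (ψ : AddAut (LinearMap.ker B.mulVecLin)) :
    ∃ U V : Matrix.GeneralLinearGroup (Fin n) ℤ,
      (U : Matrix (Fin n) (Fin n) ℤ) * B * (V : Matrix (Fin n) (Fin n) ℤ) = B ∧
      (∀ x : Fin n → ℤ,
        (QuotientAddGroup.mk ((U : Matrix (Fin n) (Fin n) ℤ).mulVec x) :
            (Fin n → ℤ) ⧸ (LinearMap.range B.mulVecLin).toAddSubgroup)
          = QuotientAddGroup.mk x) ∧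
      (∀ x : LinearMap.ker B.mulVecLin,
        (↑(ψ x) : Fin n → ℤ)
          = ((V⁻¹ : Matrix.GeneralLinearGroup (Fin n) ℤ) : Matrix (Fin n) (Fin n) ℤ).mulVec
              (x : Fin n → ℤ)) :=
  lift_kernel_automorphism_general n B ψ
end

section
/- Let N ≥ 1, let A be an N×N integer matrix, and let v₀, v₁ ∈ {1,…,N}. Let A′ be the (N+1)×(N+1) integer matrix defined by: A′(i,j) = A(i,j) for all i,j ≤ N with (i,j) ≠ (v₀,v₁); A′(v₀,v₁) = A(v₀,v₁) − 1; A′(v₀, N+1) = 1; A′(N+1, v₁) = 1; and all other entries of A′ involving the index N+1 are 0. Then the matrices U = I_{N+1} − E_{v₀,N+1} and V = I_{N+1} − E_{N+1,v₁} belong to SL(N+1,ℤ) and satisfy U · ((A − I_N) ⊕ (−1)) · V = A′ − I_{N+1}. -/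
open Matrix

/-!
Both `I - E_{v₀,N+1}` and `I - E_{N+1,v₁}` are transvections, hence have determinant one.
Written in block form over `Fin N ⊕ Fin 1`, the product is a two-step block multiplication:
the left factor moves the new column `e_{v₀}` into place, the right factor the new row `e_{v₁}ᵀ`,
and their cross term `E_{v₀,N+1} E_{N+1,v₁} = E_{v₀,v₁}` is the `-1` at position `(v₀, v₁)`.
-/

namespace Matrix

variable {n m R : Type*} [DecidableEq n] [DecidableEq m]

/-- Simple edge expansion of `A` at the edge `i → j`: the new vertex `Sum.inr 0` subdivides it. -/
def edgeExpansion [Ring R] (A : Matrix n n R) (i j : n) : Matrix (n ⊕ Fin 1) (n ⊕ Fin 1) R :=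
  fromBlocks (A - single i j 1) (single i 0 1) (single 0 j 1) 0

theorem det_one_sub_single_of_ne [Fintype n] [CommRing R] {a b : n} (hab : a ≠ b) :
    ((1 : Matrix n n R) - single a b 1).det = 1 := by
  rw [sub_eq_add_neg, single_neg, ← transvection, det_transvection_of_ne _ _ hab]

theorem one_sub_single_inl_inr [Ring R] (i : n) (k : m) :
    (1 : Matrix (n ⊕ m) (n ⊕ m) R) - single (Sum.inl i) (Sum.inr k) 1
      = fromBlocks 1 (-single i k 1) 0 1 := by
  ext (a | a) (b | b) <;> simp [single_apply, one_apply]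

theorem one_sub_single_inr_inl [Ring R] (k : m) (j : n) :
    (1 : Matrix (n ⊕ m) (n ⊕ m) R) - single (Sum.inr k) (Sum.inl j) 1
      = fromBlocks 1 0 (-single k j 1) 1 := by
  ext (a | a) (b | b) <;> simp [single_apply, one_apply]

theorem one_sub_single_mul_fromBlocks_mul_one_sub_single [Fintype n] [Fintype m] [Ring R]
    (A : Matrix n n R) (i j : n) (k : m) :
    ((1 : Matrix (n ⊕ m) (n ⊕ m) R) - single (Sum.inl i) (Sum.inr k) 1) *
        fromBlocks (A - 1) 0 0 (-1) * (1 - single (Sum.inr k) (Sum.inl j) 1)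
      = fromBlocks (A - single i j 1) (single i k 1) (single k j 1) 0 - 1 := by
  rw [one_sub_single_inl_inr, one_sub_single_inr_inl, fromBlocks_multiply, fromBlocks_multiply,
    ← fromBlocks_one, sub_eq_add_neg _ (fromBlocks _ _ _ _), fromBlocks_neg, fromBlocks_add]
  simp only [single_mul_single_same, Matrix.mul_one, Matrix.one_mul, Matrix.mul_zero,
    Matrix.zero_mul, Matrix.mul_neg, Matrix.neg_mul, mul_one, add_zero, zero_add, neg_neg, neg_zero]
  congr 1
  abel

theorem eq_edgeExpansion [Ring R] {A : Matrix n n R} {i j : n}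
    {A' : Matrix (n ⊕ Fin 1) (n ⊕ Fin 1) R}
    (h₁ : ∀ a b : n, (a, b) ≠ (i, j) → A' (Sum.inl a) (Sum.inl b) = A a b)
    (h₂ : A' (Sum.inl i) (Sum.inl j) = A i j - 1)
    (h₃ : ∀ (a : n) (k : Fin 1), A' (Sum.inl a) (Sum.inr k) = if a = i then 1 else 0)
    (h₄ : ∀ (k : Fin 1) (b : n), A' (Sum.inr k) (Sum.inl b) = if b = j then 1 else 0)
    (h₅ : ∀ k l : Fin 1, A' (Sum.inr k) (Sum.inr l) = 0) :
    A' = edgeExpansion A i j := by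
  ext (a | k) (b | l)
  · by_cases hab : (a, b) = (i, j)
    · obtain ⟨rfl, rfl⟩ := Prod.mk.inj hab
      simp [edgeExpansion, h₂]
    · have : ¬(i = a ∧ j = b) := fun ⟨hi, hj⟩ => hab (by rw [hi, hj])
      simp [edgeExpansion, h₁ a b hab, this]
  · simp [edgeExpansion, h₃, single_apply, eq_comm, Subsingleton.elim l 0]
  · simp [edgeExpansion, h₄, single_apply, eq_comm, Subsingleton.elim k 0]
  · simp [edgeExpansion, h₅]

end Matrix

theorem edge_expansion_slEquivalence_general
    (N : ℕ) (A : Matrix (Fin N) (Fin N) ℤ) (v₀ v₁ : Fin N)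
    (A' : Matrix (Fin N ⊕ Fin 1) (Fin N ⊕ Fin 1) ℤ)
    (hA'₁ : ∀ i j : Fin N, (i, j) ≠ (v₀, v₁) → A' (Sum.inl i) (Sum.inl j) = A i j)
    (hA'₂ : A' (Sum.inl v₀) (Sum.inl v₁) = A v₀ v₁ - 1)
    (hA'₃ : ∀ (i : Fin N) (k : Fin 1),
      A' (Sum.inl i) (Sum.inr k) = if i = v₀ then 1 else 0)
    (hA'₄ : ∀ (k : Fin 1) (j : Fin N),
      A' (Sum.inr k) (Sum.inl j) = if j = v₁ then 1 else 0)
    (hA'₅ : ∀ k l : Fin 1, A' (Sum.inr k) (Sum.inr l) = 0) :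
    ((1 : Matrix (Fin N ⊕ Fin 1) (Fin N ⊕ Fin 1) ℤ)
        - Matrix.single (Sum.inl v₀) (Sum.inr 0) 1).det = 1 ∧
    ((1 : Matrix (Fin N ⊕ Fin 1) (Fin N ⊕ Fin 1) ℤ)
        - Matrix.single (Sum.inr 0) (Sum.inl v₁) 1).det = 1 ∧
    ((1 : Matrix (Fin N ⊕ Fin 1) (Fin N ⊕ Fin 1) ℤ)
        - Matrix.single (Sum.inl v₀) (Sum.inr 0) 1) *
      Matrix.fromBlocks (A - 1) 0 0 (-1) *
      ((1 : Matrix (Fin N ⊕ Fin 1) (Fin N ⊕ Fin 1) ℤ)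
        - Matrix.single (Sum.inr 0) (Sum.inl v₁) 1)
      = A' - 1 := by
  refine ⟨det_one_sub_single_of_ne Sum.inl_ne_inr, det_one_sub_single_of_ne Sum.inr_ne_inl, ?_⟩
  rw [eq_edgeExpansion hA'₁ hA'₂ hA'₃ hA'₄ hA'₅, edgeExpansion]
  exact one_sub_single_mul_fromBlocks_mul_one_sub_single A v₀ v₁ 0

/-- Edge expansion at an edge from `v₀` to `v₁` yields an explicit `SL`-equivalence
`(I - E_{v₀,N+1}) · ((A - I) ⊕ (-1)) · (I - E_{N+1,v₁}) = A' - I`, where the extra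
index `N+1` is modelled as `Sum.inr 0 : Fin N ⊕ Fin 1`. -/
theorem edge_expansion_slEquivalence
    (N : ℕ) (hN : 1 ≤ N) (A : Matrix (Fin N) (Fin N) ℤ) (v₀ v₁ : Fin N)
    (A' : Matrix (Fin N ⊕ Fin 1) (Fin N ⊕ Fin 1) ℤ)
    (hA'₁ : ∀ i j : Fin N, (i, j) ≠ (v₀, v₁) → A' (Sum.inl i) (Sum.inl j) = A i j)
    (hA'₂ : A' (Sum.inl v₀) (Sum.inl v₁) = A v₀ v₁ - 1)
    (hA'₃ : ∀ (i : Fin N) (k : Fin 1),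
      A' (Sum.inl i) (Sum.inr k) = if i = v₀ then 1 else 0)
    (hA'₄ : ∀ (k : Fin 1) (j : Fin N),
      A' (Sum.inr k) (Sum.inl j) = if j = v₁ then 1 else 0)
    (hA'₅ : ∀ k l : Fin 1, A' (Sum.inr k) (Sum.inr l) = 0) :
    ((1 : Matrix (Fin N ⊕ Fin 1) (Fin N ⊕ Fin 1) ℤ)
        - Matrix.single (Sum.inl v₀) (Sum.inr 0) 1).det = 1 ∧
    ((1 : Matrix (Fin N ⊕ Fin 1) (Fin N ⊕ Fin 1) ℤ)
        - Matrix.single (Sum.inr 0) (Sum.inl v₁) 1).det = 1 ∧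
    ((1 : Matrix (Fin N ⊕ Fin 1) (Fin N ⊕ Fin 1) ℤ)
        - Matrix.single (Sum.inl v₀) (Sum.inr 0) 1) *
      Matrix.fromBlocks (A - 1) 0 0 (-1) *
      ((1 : Matrix (Fin N ⊕ Fin 1) (Fin N ⊕ Fin 1) ℤ)
        - Matrix.single (Sum.inr 0) (Sum.inl v₁) 1)
      = A' - 1 :=
  edge_expansion_slEquivalence_general N A v₀ v₁ A' hA'₁ hA'₂ hA'₃ hA'₄ hA'₅
end

section
/- Let N ≥ 1, let B be an N×N integer matrix, let u ∈ {1,…,N}, and let B₋₋ be the double Cuntz splice of B at u. Then there exist U, V ∈ SL(N+4,ℤ), each of which agrees with the identity matrix in every entry (i,j) for which not both i and j belong to the set {u, N+1, N+2, N+3, N+4}, such that U · (B ⊕ (−I₄)) · V = B₋₋. -/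
open Matrix

/-!
With `K` the lower-right `4 × 4` block of `B₋₋` and `E_{ij}` the matrix units, take
`U = [[1, -E_{u,N+1}], [0, -K]]` and `V = [[1, 0], [E_{N+2,u}, 1]]`. Then
`U (B ⊕ (-I₄)) V = [[B + E_{u,N+1} E_{N+2,u}, E_{u,N+1}], [K E_{N+2,u}, K]]`, which is `B₋₋`
because `E_{u,N+1} E_{N+2,u} = 0` and the second column of `K` is the first unit vector.
Both factors are block triangular, so `det U = det (-K) = det K = 1` and `det V = 1`.
-/

/-- The double Cuntz splice `B₋₋` of an `N × N` integer matrix `B` at the vertex `u`,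
with the four new indices `N+1, …, N+4` modelled as `Sum.inr 0, …, Sum.inr 3`. -/
def cuntzSpliceTwice {N : ℕ} (B : Matrix (Fin N) (Fin N) ℤ) (u : Fin N) :
    Matrix (Fin N ⊕ Fin 4) (Fin N ⊕ Fin 4) ℤ :=
  fun i j => match i, j with
  | Sum.inl i, Sum.inl j => B i j
  | Sum.inl i, Sum.inr k => if i = u ∧ k = 0 then 1 else 0
  | Sum.inr k, Sum.inl j => if k = 0 ∧ j = u then 1 else 0
  | Sum.inr k, Sum.inr l => !![0, 1, 1, 0; 1, 0, 0, 0; 1, 0, 0, 1; 0, 0, 1, 0] k l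

namespace Matrix

variable {n m α : Type*}

theorem fromBlocks_one_apply_of_not_both_mem [DecidableEq n] [DecidableEq m] [Zero α] [One α]
    (u : n) {R : Matrix n m α} {C : Matrix m n α} (D : Matrix m m α)
    (hR : ∀ i k, i ≠ u → R i k = 0) (hC : ∀ k j, j ≠ u → C k j = 0) (i j : n ⊕ m)
    (h : ¬((i = Sum.inl u ∨ ∃ k, i = Sum.inr k) ∧ (j = Sum.inl u ∨ ∃ k, j = Sum.inr k))) :
    fromBlocks 1 R C D i j = (1 : Matrix (n ⊕ m) (n ⊕ m) α) i j := by
  rcases i with i | k <;> rcases j with j | l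
  · simp [one_apply]
  · have hi : i ≠ u := by rintro rfl; exact h ⟨Or.inl rfl, Or.inr ⟨l, rfl⟩⟩
    simp [hR i l hi]
  · have hj : j ≠ u := by rintro rfl; exact h ⟨Or.inr ⟨k, rfl⟩, Or.inl rfl⟩
    simp [hC k j hj]
  · exact absurd ⟨Or.inr ⟨k, rfl⟩, Or.inr ⟨l, rfl⟩⟩ h

theorem fromBlocks_mul_fromBlocks_neg_one_mul [Fintype n] [Fintype m] [DecidableEq n]
    [DecidableEq m] [Ring α] (B : Matrix n n α) (R : Matrix n m α) (A : Matrix m m α)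
    (C : Matrix m n α) :
    fromBlocks 1 R 0 A * fromBlocks B 0 0 (-1) * fromBlocks 1 0 C 1 =
      fromBlocks (B - R * C) (-R) (-(A * C)) (-A) := by
  simp [fromBlocks_multiply, sub_eq_add_neg]

end Matrix

def cuntzSpliceBlock : Matrix (Fin 4) (Fin 4) ℤ :=
  !![0, 1, 1, 0; 1, 0, 0, 0; 1, 0, 0, 1; 0, 0, 1, 0]

theorem cuntzSpliceBlock_det : cuntzSpliceBlock.det = 1 := by
  decide

theorem cuntzSpliceTwice_eq_fromBlocks {N : ℕ} (B : Matrix (Fin N) (Fin N) ℤ) (u : Fin N) :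
    cuntzSpliceTwice B u = fromBlocks B (single u 0 1) (single 0 u 1) cuntzSpliceBlock := by
  ext (i | k) (j | l) <;> simp [cuntzSpliceTwice, cuntzSpliceBlock, single, eq_comm]

theorem cuntzSpliceBlock_mul_single {N : ℕ} (u : Fin N) :
    cuntzSpliceBlock * single (1 : Fin 4) u (1 : ℤ) = single 0 u 1 := by
  ext k j
  obtain rfl | hj := eq_or_ne j u
  · fin_cases k <;> simp [cuntzSpliceBlock]
  · simp [mul_single_apply_of_ne _ _ _ _ _ hj, single_apply_of_col_ne _ _ hj.symm]

theorem cuntzSpliceTwice_slEquivalence_general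
    (N : ℕ) (B : Matrix (Fin N) (Fin N) ℤ) (u : Fin N) :
    ∃ U V : Matrix (Fin N ⊕ Fin 4) (Fin N ⊕ Fin 4) ℤ,
      U.det = 1 ∧ V.det = 1 ∧
      (∀ i j : Fin N ⊕ Fin 4,
        ¬((i = Sum.inl u ∨ ∃ k, i = Sum.inr k) ∧ (j = Sum.inl u ∨ ∃ k, j = Sum.inr k)) →
          U i j = (1 : Matrix (Fin N ⊕ Fin 4) (Fin N ⊕ Fin 4) ℤ) i j) ∧
      (∀ i j : Fin N ⊕ Fin 4,
        ¬((i = Sum.inl u ∨ ∃ k, i = Sum.inr k) ∧ (j = Sum.inl u ∨ ∃ k, j = Sum.inr k)) →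
          V i j = (1 : Matrix (Fin N ⊕ Fin 4) (Fin N ⊕ Fin 4) ℤ) i j) ∧
      U * Matrix.fromBlocks B 0 0 (-1) * V = cuntzSpliceTwice B u := by
  refine ⟨fromBlocks 1 (-single u 0 1) 0 (-cuntzSpliceBlock), fromBlocks 1 0 (single 1 u 1) 1,
    ?_, ?_, fromBlocks_one_apply_of_not_both_mem u _ ?_ ?_,
    fromBlocks_one_apply_of_not_both_mem u _ ?_ ?_, ?_⟩
  · simp [det_fromBlocks_zero₂₁, det_neg, cuntzSpliceBlock_det]
  · simp
  · exact fun i k hi => by simp [single_apply_of_row_ne hi.symm]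
  · exact fun _ _ _ => rfl
  · exact fun _ _ _ => rfl
  · exact fun k j hj => single_apply_of_col_ne _ _ hj.symm _
  · rw [fromBlocks_mul_fromBlocks_neg_one_mul, cuntzSpliceTwice_eq_fromBlocks]
    simp [cuntzSpliceBlock_mul_single]

/-- There is an `SL`-equivalence from `B ⊕ (-I₄)` to the double Cuntz splice `B₋₋`,
supported on the rows and columns indexed by `u, N+1, …, N+4`. -/
theorem cuntzSpliceTwice_slEquivalence
    (N : ℕ) (hN : 1 ≤ N) (B : Matrix (Fin N) (Fin N) ℤ) (u : Fin N) :
    ∃ U V : Matrix (Fin N ⊕ Fin 4) (Fin N ⊕ Fin 4) ℤ,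
      U.det = 1 ∧ V.det = 1 ∧
      (∀ i j : Fin N ⊕ Fin 4,
        ¬((i = Sum.inl u ∨ ∃ k, i = Sum.inr k) ∧ (j = Sum.inl u ∨ ∃ k, j = Sum.inr k)) →
          U i j = (1 : Matrix (Fin N ⊕ Fin 4) (Fin N ⊕ Fin 4) ℤ) i j) ∧
      (∀ i j : Fin N ⊕ Fin 4,
        ¬((i = Sum.inl u ∨ ∃ k, i = Sum.inr k) ∧ (j = Sum.inl u ∨ ∃ k, j = Sum.inr k)) →
          V i j = (1 : Matrix (Fin N ⊕ Fin 4) (Fin N ⊕ Fin 4) ℤ) i j) ∧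
      U * Matrix.fromBlocks B 0 0 (-1) * V = cuntzSpliceTwice B u :=
  cuntzSpliceTwice_slEquivalence_general N B u
end

section
/- Let N ≥ 1, let B be an N×N integer matrix, let u ∈ {1,…,N}, and let B₋ be the single Cuntz splice of B at u. Then there exist U ∈ SL(N+2,ℤ) and V ∈ GL(N+2,ℤ) with det V = −1, each of which agrees with the identity matrix in every entry (i,j) for which not both i and j belong to the set {u, N+1, N+2}, such that U · (B ⊕ (−I₂)) · V = B₋. -/
open Matrix

/-- The single Cuntz splice `B₋` of `B` at `u`, with the two new indices
`N+1, N+2` modelled as `Sum.inr 0, Sum.inr 1`. -/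
def cuntzSpliceOnce {N : ℕ} (B : Matrix (Fin N) (Fin N) ℤ) (u : Fin N) :
    Matrix (Fin N ⊕ Fin 2) (Fin N ⊕ Fin 2) ℤ :=
  fun i j => match i, j with
  | Sum.inl i, Sum.inl j => B i j
  | Sum.inl i, Sum.inr k => if i = u ∧ k = 0 then 1 else 0
  | Sum.inr k, Sum.inl j => if k = 0 ∧ j = u then 1 else 0
  | Sum.inr k, Sum.inr l => !![0, 1; 1, 0] k l

/-!
With matrix units `E` and the swap `J = !![0, 1; 1, 0]` on the indices `N+1, N+2`, take
`U = [[I, E_{u,N+2}], [0, I₂]]` and `V = [[I, 0], [-E_{N+1,u}, -J]]`. Block multiplication gives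
`U (B ⊕ -I₂) V = [[B - E_{u,N+2} E_{N+1,u}, E_{u,N+2} J], [E_{N+1,u}, J]]`, which is `B₋` because
`E_{u,N+2} E_{N+1,u} = 0` and `E_{u,N+2} J = E_{u,N+1}`. Both factors are block triangular, so
`det U = 1` and `det V = det (-J) = -1`.
-/

theorem fromBlocks_one_mul_fromBlocks_neg_one_mul_fromBlocks_one
    {m n R : Type*} [Fintype m] [Fintype n] [DecidableEq m] [DecidableEq n] [Ring R]
    (B : Matrix m m R) (X : Matrix m n R) (Y : Matrix n m R) (W : Matrix n n R) :
    fromBlocks 1 X 0 1 * fromBlocks B 0 0 (-1) * fromBlocks 1 0 Y W =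
      fromBlocks (B - X * Y) (-(X * W)) (-Y) (-W) := by
  simp [fromBlocks_multiply, sub_eq_add_neg]

theorem fromBlocks_one_apply_eq_one_apply_of_support
    {m n R : Type*} [DecidableEq m] [DecidableEq n] [Zero R] [One R]
    {u : m} {X : Matrix m n R} {Y : Matrix n m R} (W : Matrix n n R)
    (hX : ∀ i ≠ u, ∀ k, X i k = 0) (hY : ∀ k, ∀ j ≠ u, Y k j = 0) (i j : m ⊕ n)
    (h : ¬((i = Sum.inl u ∨ ∃ k, i = Sum.inr k) ∧ (j = Sum.inl u ∨ ∃ k, j = Sum.inr k))) :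
    fromBlocks 1 X Y W i j = (1 : Matrix (m ⊕ n) (m ⊕ n) R) i j := by
  rcases i with i | i <;> rcases j with j | j
  · simp [one_apply]
  · exact hX i (fun hi => h ⟨.inl (hi ▸ rfl), .inr ⟨j, rfl⟩⟩) j
  · exact hY i j (fun hj => h ⟨.inr ⟨i, rfl⟩, .inl (hj ▸ rfl)⟩)
  · exact absurd ⟨.inr ⟨i, rfl⟩, .inr ⟨j, rfl⟩⟩ h

theorem cuntzSpliceOnce_eq_fromBlocks {N : ℕ} (B : Matrix (Fin N) (Fin N) ℤ) (u : Fin N) :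
    cuntzSpliceOnce B u = fromBlocks B (single u 0 1) (single 0 u 1) !![0, 1; 1, 0] := by
  ext (i | k) (j | l) <;> simp [cuntzSpliceOnce, single_apply, eq_comm]

theorem single_one_mul_swap {m R : Type*} [DecidableEq m] [Semiring R] (u : m) :
    single u (1 : Fin 2) (1 : R) * (!![0, 1; 1, 0] : Matrix (Fin 2) (Fin 2) R) =
      single u (0 : Fin 2) 1 := by
  ext i k
  fin_cases k <;> simp [mul_apply, Fin.sum_univ_two, single_apply]

theorem cuntzSplice_glEquivalence_general
    (N : ℕ) (B : Matrix (Fin N) (Fin N) ℤ) (u : Fin N) :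
    ∃ U V : Matrix (Fin N ⊕ Fin 2) (Fin N ⊕ Fin 2) ℤ,
      U.det = 1 ∧ V.det = -1 ∧
      (∀ i j : Fin N ⊕ Fin 2,
        ¬((i = Sum.inl u ∨ ∃ k, i = Sum.inr k) ∧ (j = Sum.inl u ∨ ∃ k, j = Sum.inr k)) →
          U i j = (1 : Matrix (Fin N ⊕ Fin 2) (Fin N ⊕ Fin 2) ℤ) i j) ∧
      (∀ i j : Fin N ⊕ Fin 2,
        ¬((i = Sum.inl u ∨ ∃ k, i = Sum.inr k) ∧ (j = Sum.inl u ∨ ∃ k, j = Sum.inr k)) →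
          V i j = (1 : Matrix (Fin N ⊕ Fin 2) (Fin N ⊕ Fin 2) ℤ) i j) ∧
      U * Matrix.fromBlocks B 0 0 (-1) * V = cuntzSpliceOnce B u := by
  refine ⟨fromBlocks 1 (single u 1 1) 0 1, fromBlocks 1 0 (-single 0 u 1) (-!![0, 1; 1, 0]),
    ?_, ?_, fromBlocks_one_apply_eq_one_apply_of_support 1 (fun i hi k => ?_) (fun _ _ _ => rfl),
    fromBlocks_one_apply_eq_one_apply_of_support _ (fun _ _ _ => rfl) (fun k j hj => ?_), ?_⟩
  · simp
  · simp [det_fromBlocks_zero₁₂, det_fin_two_of]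
  · exact single_apply_of_row_ne (Ne.symm hi) _ _ _
  · simp [single_apply_of_col_ne _ _ (Ne.symm hj)]
  · rw [fromBlocks_one_mul_fromBlocks_neg_one_mul_fromBlocks_one, cuntzSpliceOnce_eq_fromBlocks,
      Matrix.mul_neg, Matrix.mul_neg, neg_neg, single_one_mul_swap]
    simp

/-- There is a `GL`-equivalence `(U, V)` from `B ⊕ (-I₂)` to the single Cuntz splice
`B₋` of `B` at `u`, with `det U = 1`, `det V = -1`, both supported on the rows and
columns indexed by `u, N+1, N+2`. -/
theorem cuntzSplice_glEquivalence
    (N : ℕ) (hN : 1 ≤ N) (B : Matrix (Fin N) (Fin N) ℤ) (u : Fin N) :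
    ∃ U V : Matrix (Fin N ⊕ Fin 2) (Fin N ⊕ Fin 2) ℤ,
      U.det = 1 ∧ V.det = -1 ∧
      (∀ i j : Fin N ⊕ Fin 2,
        ¬((i = Sum.inl u ∨ ∃ k, i = Sum.inr k) ∧ (j = Sum.inl u ∨ ∃ k, j = Sum.inr k)) →
          U i j = (1 : Matrix (Fin N ⊕ Fin 2) (Fin N ⊕ Fin 2) ℤ) i j) ∧
      (∀ i j : Fin N ⊕ Fin 2,
        ¬((i = Sum.inl u ∨ ∃ k, i = Sum.inr k) ∧ (j = Sum.inl u ∨ ∃ k, j = Sum.inr k)) →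
          V i j = (1 : Matrix (Fin N ⊕ Fin 2) (Fin N ⊕ Fin 2) ℤ) i j) ∧
      U * Matrix.fromBlocks B 0 0 (-1) * V = cuntzSpliceOnce B u :=
  cuntzSplice_glEquivalence_general N B u
end
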